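/- Fix an integer m ≥ 1 and define the n-th order, m sub-interval spline approximation f_{n,m}(x) = (2/√π) Σ_{i=0}^{m−1} Σ_{k=0}^n c_{n,k} (x/m)^{k+1} [p(k, ix/m)·exp(−i²x²/m²) + (−1)^k p(k, (i+1)x/m)·exp(−(i+1)²x²/m²)]. Then for every fixed real x ≥ 0, lim_{n→∞} f_{n,m}(x) = erf(x). -/

import Mathlib

open Real intervalIntegral Filter

noncomputable def erf (x : ℝ) : ℝ :=
  (2 / Real.sqrt π) * ∫ t in (0:ℝ)..x, Real.exp (-t ^ 2)

noncomputable def p : ℕ → ℝ → ℝ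
  | 0 => fun _ => 1
  | (k + 1) => fun x => deriv (p k) x - 2 * x * p k x

noncomputable def c (n k : ℕ) : ℝ :=
  ((Nat.factorial n : ℝ) / ((Nat.factorial (n - k) : ℝ) * (Nat.factorial (k + 1) : ℝ))) *
    ((Nat.factorial (2 * n + 1 - k) : ℝ) / (2 * (Nat.factorial (2 * n + 1) : ℝ)))

noncomputable def fsub (n m : ℕ) (x : ℝ) : ℝ :=
  (2 / Real.sqrt π) * ∑ i ∈ Finset.range m, ∑ k ∈ Finset.range (n + 1),
    c n k * (x / m) ^ (k + 1) *
      (p k ((i : ℝ) * x / m) * Real.exp (-((i : ℝ) ^ 2 * x ^ 2 / (m : ℝ) ^ 2)) +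
        (-1 : ℝ) ^ k * p k (((i : ℝ) + 1) * x / m) *
          Real.exp (-(((i : ℝ) + 1) ^ 2 * x ^ 2 / (m : ℝ) ^ 2)))

/-!
On `[a, b]` the inner sum of `fsub` is a two-point Hermite quadrature rule for `f t = exp (-t ^ 2)`.
Integrating by parts `2n + 2` times against the kernel `(t - a) ^ (n + 1) * (b - t) ^ (n + 1)`,
whose derivatives at the end points produce the weights `c n k`, writes its error as
`(-1) ^ n / (2n+2)!` times `∫ kernel * f⁽²ⁿ⁺²⁾`. Since `f⁽ᵏ⁾ = p k * f` and the recurrence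
`p (k + 2) = -2 (k + 1) p k - 2 t p (k + 1)` gives `p k t ^ 2 ≤ (8 t ^ 2 + 3) ^ k * k !`, these
derivatives grow only like `√(k !)`, so the error is `O(√(C ^ (2n+2) / (2n+2)!))` and tends to `0`
on every interval.
-/

open Polynomial
open scoped Nat

noncomputable def pPoly : ℕ → ℝ[X]
  | 0 => 1
  | k + 1 => derivative (pPoly k) - 2 * X * pPoly k

lemma p_eq_eval_pPoly (k : ℕ) (t : ℝ) : p k t = (pPoly k).eval t := by
  induction k generalizing t with
  | zero => simp [p, pPoly]
  | succ k ih =>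
    have hp : p k = fun t => (pPoly k).eval t := funext ih
    simp [p, pPoly, hp, Polynomial.deriv]

lemma derivative_pPoly_succ (k : ℕ) :
    derivative (pPoly (k + 1)) = -(2 * (k + 1)) * pPoly k := by
  induction k with
  | zero => simp [pPoly]
  | succ k ih =>
    rw [pPoly]
    simp only [derivative_sub, derivative_mul, derivative_X, derivative_neg,
      derivative_ofNat, derivative_natCast, derivative_add, derivative_one, ih]
    rw [pPoly]
    push_cast
    ring

lemma hasDerivAt_p (k : ℕ) (t : ℝ) : HasDerivAt (p k) (p (k + 1) t + 2 * t * p k t) t := by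
  rw [show p k = fun t => (pPoly k).eval t from funext (p_eq_eval_pPoly k)]
  refine ((pPoly k).hasDerivAt t).congr_deriv ?_
  simp only [p_eq_eval_pPoly, pPoly, eval_sub, eval_mul, eval_ofNat, eval_X]
  ring

lemma p_add_two (k : ℕ) (t : ℝ) : p (k + 2) t = -2 * (k + 1) * p k t - 2 * t * p (k + 1) t := by
  rw [p_eq_eval_pPoly, pPoly, derivative_pPoly_succ]
  simp only [eval_sub, eval_mul, eval_neg, eval_add, eval_ofNat, eval_natCast, eval_one, eval_X,
    p_eq_eval_pPoly]
  ring

lemma sq_p_le (k : ℕ) (t : ℝ) : p k t ^ 2 ≤ (8 * t ^ 2 + 3) ^ k * k ! := by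
  set A := 8 * t ^ 2 + 3 with hA_def
  have hA : 8 * t ^ 2 ≤ A := by linarith
  have hA3 : 3 ≤ A := by nlinarith [sq_nonneg t]
  suffices ∀ k : ℕ, p k t ^ 2 ≤ A ^ k * k ! ∧ p (k + 1) t ^ 2 ≤ A ^ (k + 1) * (k + 1)! from
    (this k).1
  intro k
  induction k with
  | zero =>
    have hp1 : p 1 t = -2 * t := by simp [p_eq_eval_pPoly, pPoly]
    have hp0 : p 0 t = 1 := rfl
    simp only [hp0, hp1, pow_zero, Nat.factorial, Nat.cast_one, one_pow, zero_add, mul_one, pow_one]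
    constructor <;> nlinarith
  | succ k ih =>
    refine ⟨ih.2, ?_⟩
    obtain ⟨hu, hv⟩ := ih
    have hfac : ((k + 2)! : ℝ) = (k + 2) * (k + 1) * k ! := by
      push_cast [Nat.factorial_succ]; ring
    have hfac' : ((k + 1)! : ℝ) = (k + 1) * k ! := by
      push_cast [Nat.factorial_succ]; ring
    rw [hfac'] at hv
    rw [p_add_two, hfac]
    calc (-2 * (k + 1) * p k t - 2 * t * p (k + 1) t) ^ 2
        ≤ 8 * (k + 1) ^ 2 * p k t ^ 2 + 8 * t ^ 2 * p (k + 1) t ^ 2 := by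
          nlinarith [sq_nonneg (2 * (k + 1) * p k t - 2 * t * p (k + 1) t)]
      _ ≤ 8 * (k + 1) ^ 2 * (A ^ k * k !) + 8 * t ^ 2 * (A ^ (k + 1) * ((k + 1) * k !)) := by
          gcongr
      _ ≤ A ^ (k + 1 + 1) * ((k + 2) * (k + 1) * k !) := by
          have hAA : 8 * (k + 1) + 8 * t ^ 2 * A ≤ A ^ 2 * (k + 2) := by
            have hk : (0 : ℝ) ≤ k := k.cast_nonneg
            nlinarith [mul_le_mul_of_nonneg_right hA (by linarith : 0 ≤ A),
              mul_nonneg hk (by nlinarith : (0 : ℝ) ≤ A ^ 2 - 8)]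
          calc _ = (k + 1) * (A ^ k * k !) * (8 * (k + 1) + 8 * t ^ 2 * A) := by ring
            _ ≤ (k + 1) * (A ^ k * k !) * (A ^ 2 * (k + 2)) := by gcongr
            _ = _ := by ring

noncomputable def gaussian (t : ℝ) : ℝ := exp (-t ^ 2)

lemma contDiff_gaussian {n : WithTop ℕ∞} : ContDiff ℝ n gaussian :=
  contDiff_exp.comp (contDiff_id.pow 2).neg

lemma hasDerivAt_gaussian (t : ℝ) : HasDerivAt gaussian (-2 * t * gaussian t) t := by
  refine ((hasDerivAt_pow 2 t).neg.exp).congr_deriv ?_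
  simp only [gaussian, Pi.neg_apply]
  push_cast
  ring

lemma iteratedDeriv_gaussian (k : ℕ) : iteratedDeriv k gaussian = fun t => p k t * gaussian t := by
  induction k with
  | zero => funext t; simp [p]
  | succ k ih =>
    funext t
    rw [iteratedDeriv_succ, ih]
    refine (((hasDerivAt_p k t).mul (hasDerivAt_gaussian t)).deriv).trans ?_
    ring

lemma abs_iteratedDeriv_gaussian_le (k : ℕ) (t : ℝ) :
    |iteratedDeriv k gaussian t| ≤ √((8 * t ^ 2 + 3) ^ k * k !) := by
  have hg : |gaussian t| ≤ 1 := by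
    rw [gaussian, abs_of_pos (exp_pos _)]
    exact exp_le_one_iff.mpr (by nlinarith [sq_nonneg t])
  rw [iteratedDeriv_gaussian, abs_mul, ← sqrt_sq_eq_abs]
  calc √(p k t ^ 2) * |gaussian t| ≤ √(p k t ^ 2) := mul_le_of_le_one_right (sqrt_nonneg _) hg
    _ ≤ _ := sqrt_le_sqrt (sq_p_le k t)

open Finset in
theorem integral_eval_mul_iteratedDeriv (P : ℝ[X]) {N : ℕ} {f : ℝ → ℝ} (hf : ContDiff ℝ N f)
    (a b : ℝ) :
    ∫ t in a..b, P.eval t * iteratedDeriv N f t =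
      ∑ j ∈ range N, (-1) ^ j * ((derivative^[j] P).eval b * iteratedDeriv (N - 1 - j) f b -
        (derivative^[j] P).eval a * iteratedDeriv (N - 1 - j) f a) +
      (-1) ^ N * ∫ t in a..b, (derivative^[N] P).eval t * f t := by
  induction N generalizing f with
  | zero => simp
  | succ N ih =>
    have hf' : ContDiff ℝ N (deriv f) := (contDiff_succ_iff_deriv.1 hf).2.2
    have hparts : ∫ t in a..b, (derivative^[N] P).eval t * deriv f t =
        (derivative^[N] P).eval b * f b - (derivative^[N] P).eval a * f a -
          ∫ t in a..b, (derivative^[N + 1] P).eval t * f t := by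
      rw [Function.iterate_succ_apply']
      exact integral_mul_deriv_eq_deriv_mul (fun t _ => (derivative^[N] P).hasDerivAt t)
        (fun t _ => (hf.differentiable (by simp) t).hasDerivAt)
        ((derivative^[N] P).derivative.continuous.intervalIntegrable a b)
        ((hf.continuous_deriv (by simp)).intervalIntegrable a b)
    have hshift : ∀ j ∈ range N, iteratedDeriv (N - 1 - j) (deriv f) =
        iteratedDeriv (N - j) f := by
      intro j hj
      rw [← iteratedDeriv_succ', show N - 1 - j + 1 = N - j by grind]
    rw [iteratedDeriv_succ', ih hf', hparts, sum_range_succ, Nat.add_sub_cancel, Nat.sub_self,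
      iteratedDeriv_zero, sum_congr rfl fun j hj => by rw [hshift j hj]]
    ring

noncomputable def kernelPoly (a b : ℝ) (n : ℕ) : ℝ[X] := (X - C a) ^ (n + 1) * (C b - X) ^ (n + 1)

lemma kernelPoly_comm (a b : ℝ) (n : ℕ) : kernelPoly a b n = kernelPoly b a n := by
  rw [kernelPoly, kernelPoly, ← mul_pow, ← mul_pow]
  ring

lemma natDegree_kernelPoly_le (a b : ℝ) (n : ℕ) : (kernelPoly a b n).natDegree ≤ 2 * n + 2 := by
  unfold kernelPoly
  compute_degree
  omega

lemma taylor_kernelPoly (a b : ℝ) (n : ℕ) :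
    taylor a (kernelPoly a b n) =
      C ((-1) ^ (n + 1)) * (X ^ (n + 1) * (X + C (a - b)) ^ (n + 1)) := by
  have hneg : C b - (X + C a) = -(X + C (a - b)) := by rw [C_sub]; ring
  rw [kernelPoly, taylor_apply, mul_comp, pow_comp, pow_comp, sub_comp, sub_comp, X_comp, C_comp,
    C_comp, add_sub_cancel_right, hneg, neg_pow, C_pow, C_neg, C_1]
  ring

lemma eval_iterate_derivative_eq_factorial_mul_coeff_taylor {R : Type*} [CommSemiring R]
    (P : R[X]) (r : R) (j : ℕ) :
    (derivative^[j] P).eval r = j ! * (taylor r P).coeff j := by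
  rw [taylor_coeff, ← factorial_smul_hasseDeriv, LinearMap.smul_apply, eval_smul, nsmul_eq_mul]

lemma eval_iterate_derivative_kernelPoly_of_le {a b : ℝ} {n j : ℕ} (hj : j ≤ n) :
    (derivative^[j] (kernelPoly a b n)).eval a = 0 := by
  rw [eval_iterate_derivative_eq_factorial_mul_coeff_taylor, taylor_kernelPoly, coeff_C_mul,
    coeff_X_pow_mul', if_neg (by omega), mul_zero, mul_zero]

lemma eval_iterate_derivative_kernelPoly_add (a b : ℝ) (n s : ℕ) :
    (derivative^[n + 1 + s] (kernelPoly a b n)).eval a =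
      (-1) ^ (n + 1) * ((n + 1 + s)! * (n + 1).choose s) * (a - b) ^ (n + 1 - s) := by
  rw [eval_iterate_derivative_eq_factorial_mul_coeff_taylor, taylor_kernelPoly, coeff_C_mul,
    add_comm (n + 1) s, coeff_X_pow_mul, coeff_X_add_C_pow]
  ring

lemma eval_iterate_derivative_kernelPoly_top (a b t : ℝ) (n : ℕ) :
    (derivative^[2 * n + 2] (kernelPoly a b n)).eval t = (-1) ^ (n + 1) * (2 * n + 2)! := by
  have hdeg : (derivative^[2 * n + 2] (kernelPoly a b n)).natDegree = 0 := by
    have := natDegree_iterate_derivative (kernelPoly a b n) (2 * n + 2)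
    have := natDegree_kernelPoly_le a b n
    omega
  calc (derivative^[2 * n + 2] (kernelPoly a b n)).eval t
      = (derivative^[2 * n + 2] (kernelPoly a b n)).eval a := by
        rw [eq_C_of_natDegree_eq_zero hdeg, eval_C, eval_C]
    _ = _ := by
        rw [show 2 * n + 2 = n + 1 + (n + 1) by ring, eval_iterate_derivative_kernelPoly_add]
        simp

lemma factorial_mul_c {n k : ℕ} (hk : k ≤ n) :
    ((2 * n + 2)! : ℝ) * c n k = (2 * n + 1 - k)! * (n + 1).choose (n - k) := by
  have hchoose : ((n + 1).choose (n - k) * (n - k)! * (k + 1)! : ℝ) = (n + 1) * n ! := by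
    rw [show k + 1 = n + 1 - (n - k) by omega]
    exact_mod_cast Nat.choose_mul_factorial_mul_factorial (by omega)
  rw [c, Nat.factorial_succ (2 * n + 1)]
  push_cast
  field_simp
  linear_combination -2 * hchoose

noncomputable def splineIntegral (n : ℕ) (f : ℝ → ℝ) (a b : ℝ) : ℝ :=
  ∑ k ∈ Finset.range (n + 1), c n k * (b - a) ^ (k + 1) *
    (iteratedDeriv k f a + (-1) ^ k * iteratedDeriv k f b)

lemma eval_iterate_derivative_kernelPoly_left {a b : ℝ} {n k : ℕ} (hk : k ≤ n) :
    (derivative^[2 * n + 1 - k] (kernelPoly a b n)).eval a =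
      (-1) ^ (n + 1) * ((2 * n + 1 - k)! * (n + 1).choose (n - k)) * (a - b) ^ (k + 1) := by
  rw [show 2 * n + 1 - k = n + 1 + (n - k) by omega, eval_iterate_derivative_kernelPoly_add,
    show n + 1 - (n - k) = k + 1 by omega]

lemma eval_iterate_derivative_kernelPoly_right {a b : ℝ} {n k : ℕ} (hk : k ≤ n) :
    (derivative^[2 * n + 1 - k] (kernelPoly a b n)).eval b =
      (-1) ^ (n + 1) * ((2 * n + 1 - k)! * (n + 1).choose (n - k)) * (b - a) ^ (k + 1) := by
  rw [kernelPoly_comm, eval_iterate_derivative_kernelPoly_left hk]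

lemma boundary_term_kernelPoly {n k : ℕ} (hk : k ≤ n) (f : ℝ → ℝ) (a b : ℝ) :
    (-1) ^ (2 * n + 1 - k) *
        ((derivative^[2 * n + 1 - k] (kernelPoly a b n)).eval b * iteratedDeriv k f b -
          (derivative^[2 * n + 1 - k] (kernelPoly a b n)).eval a * iteratedDeriv k f a) =
      (-1) ^ n * ((2 * n + 2)! * (c n k * (b - a) ^ (k + 1) *
        (iteratedDeriv k f a + (-1) ^ k * iteratedDeriv k f b))) := by
  rw [eval_iterate_derivative_kernelPoly_left hk, eval_iterate_derivative_kernelPoly_right hk,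
    ← factorial_mul_c hk, show a - b = -(b - a) by ring, neg_pow (b - a)]
  obtain ⟨d, rfl⟩ := Nat.exists_eq_add_of_le hk
  rw [show 2 * (k + d) + 1 - k = k + 2 * d + 1 by omega]
  rcases neg_one_pow_eq_or ℝ k with hk | hk <;> rcases neg_one_pow_eq_or ℝ d with hd | hd <;>
    simp only [pow_add, pow_mul, pow_one, hk, hd, neg_one_sq, one_pow] <;> ring

open Finset in
theorem factorial_mul_splineIntegral_sub_integral {f : ℝ → ℝ} {n : ℕ}
    (hf : ContDiff ℝ (2 * n + 2) f) (a b : ℝ) :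
    (2 * n + 2)! * (splineIntegral n f a b - ∫ t in a..b, f t) =
      (-1) ^ n * ∫ t in a..b, (kernelPoly a b n).eval t * iteratedDeriv (2 * n + 2) f t := by
  have hboundary : ∑ j ∈ range (2 * n + 2), (-1) ^ j *
      ((derivative^[j] (kernelPoly a b n)).eval b * iteratedDeriv (2 * n + 2 - 1 - j) f b -
        (derivative^[j] (kernelPoly a b n)).eval a * iteratedDeriv (2 * n + 2 - 1 - j) f a) =
      (-1) ^ n * ((2 * n + 2)! * splineIntegral n f a b) := by
    rw [← sum_range_reflect, ← sum_range_add_sum_Ico _ (by omega : n + 1 ≤ 2 * n + 2),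
      sum_eq_zero (s := Ico _ _), add_zero, splineIntegral, mul_sum, mul_sum]
    · refine sum_congr rfl fun k hk => ?_
      have hk : k ≤ n := Nat.lt_succ_iff.mp (mem_range.mp hk)
      rw [show 2 * n + 2 - 1 - k = 2 * n + 1 - k by omega,
        show 2 * n + 2 - 1 - (2 * n + 1 - k) = k by omega, boundary_term_kernelPoly hk]
    · intro j hj
      have hj : 2 * n + 2 - 1 - j ≤ n := by grind
      rw [eval_iterate_derivative_kernelPoly_of_le hj, kernelPoly_comm,
        eval_iterate_derivative_kernelPoly_of_le hj]
      ring
  have hlast : ∫ t in a..b, (derivative^[2 * n + 2] (kernelPoly a b n)).eval t * f t =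
      (-1) ^ (n + 1) * (2 * n + 2)! * ∫ t in a..b, f t := by
    simp_rw [eval_iterate_derivative_kernelPoly_top]
    exact integral_const_mul _ _
  have heven : (-1 : ℝ) ^ (2 * n + 2) = 1 := by rw [pow_add, pow_mul]; norm_num
  have hsq : ((-1 : ℝ) ^ n) ^ 2 = 1 := by rw [← pow_mul, pow_mul', neg_one_sq, one_pow]
  rw [integral_eval_mul_iteratedDeriv _ hf, hboundary, hlast, heven]
  linear_combination -(2 * n + 2)! * (splineIntegral n f a b - ∫ t in a..b, f t) * hsq

lemma abs_eval_kernelPoly_le {a b t : ℝ} (n : ℕ) (ht : t ∈ Set.uIcc a b) :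
    |(kernelPoly a b n).eval t| ≤ |b - a| ^ (2 * n + 2) := by
  rw [kernelPoly, eval_mul, eval_pow, eval_pow, abs_mul, abs_pow, abs_pow,
    show 2 * n + 2 = (n + 1) + (n + 1) by ring, pow_add |b - a|]
  simp only [eval_sub, eval_X, eval_C]
  gcongr ?_ ^ _ * ?_ ^ _
  exacts [Set.abs_sub_left_of_mem_uIcc ht, Set.abs_sub_right_of_mem_uIcc ht]

theorem abs_splineIntegral_sub_integral_le {f : ℝ → ℝ} {n : ℕ} (hf : ContDiff ℝ (2 * n + 2) f)
    {a b M : ℝ} (hM : ∀ t ∈ Set.uIcc a b, |iteratedDeriv (2 * n + 2) f t| ≤ M) :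
    |splineIntegral n f a b - ∫ t in a..b, f t| ≤ |b - a| ^ (2 * n + 3) / (2 * n + 2)! * M := by
  have hkernel : |∫ t in a..b, (kernelPoly a b n).eval t * iteratedDeriv (2 * n + 2) f t| ≤
      |b - a| ^ (2 * n + 2) * M * |b - a| := by
    rw [← Real.norm_eq_abs]
    refine norm_integral_le_of_norm_le_const fun t ht => ?_
    have ht := Set.uIoc_subset_uIcc ht
    rw [Real.norm_eq_abs, abs_mul]
    exact mul_le_mul (abs_eval_kernelPoly_le n ht) (hM t ht) (abs_nonneg _) (by positivity)
  have hfac : (0 : ℝ) < (2 * n + 2)! := by positivity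
  rw [show splineIntegral n f a b - ∫ t in a..b, f t = (-1) ^ n *
      (∫ t in a..b, (kernelPoly a b n).eval t * iteratedDeriv (2 * n + 2) f t) / (2 * n + 2)! by
    rw [← factorial_mul_splineIntegral_sub_integral hf]; field_simp]
  rw [abs_div, abs_mul, abs_pow, abs_neg, abs_one, one_pow, one_mul, abs_of_pos hfac]
  calc _ ≤ |b - a| ^ (2 * n + 2) * M * |b - a| / (2 * n + 2)! := by gcongr
    _ = _ := by ring

lemma tendsto_pow_div_factorial_mul_sqrt {h : ℝ} (hh : 0 ≤ h) (A : ℝ) :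
    Tendsto (fun N : ℕ => h ^ N / N ! * √(A ^ N * N !)) atTop (nhds 0) := by
  have hlim := (FloorSemiring.tendsto_pow_div_factorial_atTop (h ^ 2 * A)).sqrt
  rw [sqrt_zero] at hlim
  refine hlim.congr fun N => ?_
  have hfac : (0 : ℝ) < N ! := by positivity
  rw [← sqrt_sq (by positivity : 0 ≤ h ^ N / N !), ← sqrt_mul (by positivity)]
  congr 1
  field_simp
  ring

theorem tendsto_splineIntegral_gaussian (a b : ℝ) :
    Tendsto (fun n => splineIntegral n gaussian a b) atTop (nhds (∫ t in a..b, gaussian t)) := by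
  set A := 8 * (a ^ 2 + b ^ 2) + 3
  have hderiv : ∀ n : ℕ, ∀ t ∈ Set.uIcc a b,
      |iteratedDeriv (2 * n + 2) gaussian t| ≤ √(A ^ (2 * n + 2) * (2 * n + 2)!) := by
    intro n t ht
    have ht2 : t ^ 2 ≤ a ^ 2 + b ^ 2 := by
      rcases Set.mem_uIcc.mp ht with ⟨h1, h2⟩ | ⟨h1, h2⟩ <;>
        nlinarith [mul_nonneg (sub_nonneg.2 h1) (sub_nonneg.2 h2), sq_nonneg (a + b),
          sq_nonneg (a - b)]
    refine (abs_iteratedDeriv_gaussian_le _ t).trans (sqrt_le_sqrt ?_)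
    gcongr
    linarith
  have hbound := (tendsto_pow_div_factorial_mul_sqrt (abs_nonneg (b - a)) A).comp
    (tendsto_atTop_mono (fun n => by omega : ∀ n : ℕ, n ≤ 2 * n + 2) tendsto_id)
    |>.const_mul |b - a|
  rw [mul_zero] at hbound
  refine tendsto_iff_norm_sub_tendsto_zero.mpr
    (squeeze_zero (fun _ => norm_nonneg _) (fun n => ?_) hbound)
  rw [Real.norm_eq_abs]
  refine (abs_splineIntegral_sub_integral_le contDiff_gaussian (hderiv n)).trans_eq ?_
  simp only [Function.comp_apply]
  ring

lemma fsub_eq_sum_splineIntegral (n m : ℕ) (x : ℝ) :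
    fsub n m x = 2 / √π *
      ∑ i ∈ Finset.range m, splineIntegral n gaussian (i * x / m) ((i + 1) * x / m) := by
  unfold fsub splineIntegral
  congr 1
  refine Finset.sum_congr rfl fun i _ => Finset.sum_congr rfl fun k _ => ?_
  simp only [iteratedDeriv_gaussian, gaussian]
  ring_nf

lemma erf_eq_sum_integral {m : ℕ} (hm : m ≠ 0) (x : ℝ) :
    erf x = 2 / √π * ∑ i ∈ Finset.range m, ∫ t in i * x / m..(i + 1) * x / m, gaussian t := by
  have hsum := sum_integral_adjacent_intervals (a := fun i : ℕ => i * x / m) (n := m)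
    (μ := MeasureTheory.volume) fun i _ =>
      (contDiff_gaussian (n := 0)).continuous.intervalIntegrable _ _
  push_cast at hsum
  rw [hsum, zero_mul, zero_div, mul_div_cancel_left₀ x (Nat.cast_ne_zero.mpr hm)]
  rfl

theorem subinterval_spline_tendsto_erf_general (m : ℕ) (hm : 1 ≤ m) (x : ℝ) :
    Tendsto (fun n : ℕ => fsub n m x) atTop (nhds (erf x)) := by
  simp_rw [fsub_eq_sum_splineIntegral, erf_eq_sum_integral (by omega : m ≠ 0) x]
  exact (tendsto_finsetSum _ fun i _ => tendsto_splineIntegral_gaussian _ _).const_mul _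

/-- Pointwise convergence of the m sub-interval spline approximations to erf. -/
theorem subinterval_spline_tendsto_erf (m : ℕ) (hm : 1 ≤ m) (x : ℝ) (hx : 0 ≤ x) :
    Tendsto (fun n : ℕ => fsub n m x) atTop (nhds (erf x)) :=
  subinterval_spline_tendsto_erf_general m hm x
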